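/- arXiv:1403.5338 — 5 statements merged into one kernel-verified Lean document; each statement's English description precedes it below -/
import Mathlib

section
/- Let x be a covariant causet (c-causet) and let a, b, c be elements of x with a < c < b. Then d(a,b) ≤ d(a,c) + d(c,b), where d is the geodesic distance determined by the unique labeling of x. -/
/-
The distance is an infimum of path lengths, and the triangle inequality is inherited from
paths: a path from `a` to `c` followed by one from `c` to `b` is a path from `a` to `b`, and the
length of the concatenation is at most the sum of the lengths because `√(x + y) ≤ √x + √y`.
The infima are over nonempty sets since in a finite poset every `a ≤ b` is a chain of covers.
-/

namespace Causet

variable {α : Type*} [PartialOrder α] [Fintype α]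

/-- A labeling of a causet (finite poset): an order-preserving bijection onto `{1,…,|α|}`
(modelled as `Fin (Fintype.card α)`). -/
def IsLabeling (ℓ : α ≃ Fin (Fintype.card α)) : Prop :=
  ∀ a b : α, a < b → ℓ a < ℓ b

/-- A causet is covariant (a c-causet) if it admits exactly one labeling. -/
def IsCovariant (α : Type*) [PartialOrder α] [Fintype α] : Prop :=
  ∃! ℓ : α ≃ Fin (Fintype.card α), IsLabeling ℓ

/-- `l` is a path from `a` to `b`: a nonempty sequence starting at `a`, ending at `b`,
in which each element is a parent of the next (i.e. is covered by the next). -/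
def IsPath (l : List α) (a b : α) : Prop :=
  l ≠ [] ∧ l.head? = some a ∧ l.getLast? = some b ∧ l.Chain' (· ⋖ ·)

/-- The length of a path: the square root of the sum of squared label differences of
consecutive vertices. -/
noncomputable def pathLength (ℓ : α ≃ Fin (Fintype.card α)) (l : List α) : ℝ :=
  Real.sqrt (((l.zip l.tail).map fun p => (((ℓ p.2 : ℕ) : ℝ) - ((ℓ p.1 : ℕ) : ℝ)) ^ 2).sum)

/-- The distance `d a b`: the minimal length of a path from `a` to `b`. -/
noncomputable def dist (ℓ : α ≃ Fin (Fintype.card α)) (a b : α) : ℝ :=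
  sInf {r : ℝ | ∃ l : List α, IsPath l a b ∧ r = pathLength ℓ l}

theorem _root_.List.zip_tail_append_tail {β : Type*} {l₁ l₂ : List β}
    (h : l₂.head? = l₁.getLast?) :
    (l₁ ++ l₂.tail).zip (l₁ ++ l₂.tail).tail = l₁.zip l₁.tail ++ l₂.zip l₂.tail := by
  induction l₁ with
  | nil => simp_all
  | cons x l ih =>
    cases l with
    | nil =>
      obtain ⟨t, rfl⟩ : ∃ t, l₂ = x :: t := by cases l₂ <;> simp_all
      simp
    | cons y l' =>
      rw [List.getLast?_cons_cons] at h
      simp only [List.cons_append, List.tail_cons, List.zip_cons_cons] at ih ⊢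
      rw [ih h]

theorem _root_.Real.sqrt_add_le_add_sqrt {x y : ℝ} (hx : 0 ≤ x) (hy : 0 ≤ y) :
    √(x + y) ≤ √x + √y := by
  rw [Real.sqrt_le_iff, add_sq, Real.sq_sqrt hx, Real.sq_sqrt hy]
  exact ⟨by positivity, by nlinarith [Real.sqrt_nonneg x, Real.sqrt_nonneg y]⟩

omit [Fintype α] in
lemma exists_isPath_of_le [LocallyFiniteOrder α] {a b : α} (h : a ≤ b) : ∃ l, IsPath l a b := by
  obtain ⟨l, hne, hchain, rfl, rfl⟩ :=
    List.exists_isChain_ne_nil_of_relationReflTransGen (le_iff_reflTransGen_covBy.1 h)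
  exact ⟨l, hne, List.head?_eq_some_head hne, List.getLast?_eq_some_getLast hne, hchain⟩

omit [Fintype α] in
lemma IsPath.append_tail {l₁ l₂ : List α} {a b c : α} (h₁ : IsPath l₁ a c)
    (h₂ : IsPath l₂ c b) : IsPath (l₁ ++ l₂.tail) a b := by
  obtain ⟨hne₁, hhead₁, hlast₁, hchain₁⟩ := h₁
  obtain ⟨_, hhead₂, hlast₂, hchain₂⟩ := h₂
  obtain ⟨t, rfl⟩ := List.head?_eq_some_iff.1 hhead₂
  refine ⟨by simp [hne₁], by rwa [List.head?_append_of_ne_nil _ hne₁], ?_, ?_⟩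
  · rw [List.getLast?_cons] at hlast₂
    simp [List.getLast?_append, hlast₁, ← hlast₂]
  · refine hchain₁.append hchain₂.tail fun x hx y hy => ?_
    rw [hlast₁, Option.mem_some_iff] at hx
    exact hx ▸ List.isChain_cons.1 hchain₂ |>.1 y hy

omit [PartialOrder α] in
lemma pathLength_append_tail_le (ℓ : α ≃ Fin (Fintype.card α)) {l₁ l₂ : List α}
    (h : l₂.head? = l₁.getLast?) :
    pathLength ℓ (l₁ ++ l₂.tail) ≤ pathLength ℓ l₁ + pathLength ℓ l₂ := by
  have sum_nonneg (l : List α) : 0 ≤ ((l.zip l.tail).map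
      fun p => (((ℓ p.2 : ℕ) : ℝ) - ((ℓ p.1 : ℕ) : ℝ)) ^ 2).sum :=
    List.sum_nonneg fun _ hx => by obtain ⟨_, _, rfl⟩ := List.mem_map.1 hx; positivity
  unfold pathLength
  rw [List.zip_tail_append_tail h, List.map_append, List.sum_append]
  exact Real.sqrt_add_le_add_sqrt (sum_nonneg l₁) (sum_nonneg l₂)

lemma dist_le_pathLength (ℓ : α ≃ Fin (Fintype.card α)) {l : List α} {a b : α}
    (hl : IsPath l a b) : dist ℓ a b ≤ pathLength ℓ l :=
  csInf_le ⟨0, by rintro _ ⟨l', -, rfl⟩; exact Real.sqrt_nonneg _⟩ ⟨l, hl, rfl⟩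

lemma le_dist (ℓ : α ≃ Fin (Fintype.card α)) {a b : α} (hab : a ≤ b) {r : ℝ}
    (h : ∀ l, IsPath l a b → r ≤ pathLength ℓ l) : r ≤ dist ℓ a b := by
  classical
  let : LocallyFiniteOrder α := Fintype.toLocallyFiniteOrder
  obtain ⟨l, hl⟩ := exists_isPath_of_le hab
  exact le_csInf ⟨_, l, hl, rfl⟩ fun _ ⟨l', hl', hr⟩ => hr ▸ h l' hl'

theorem dist_triangle_general (ℓ : α ≃ Fin (Fintype.card α))
    (a b c : α) (hac : a < c) (hcb : c < b) :
    dist ℓ a b ≤ dist ℓ a c + dist ℓ c b := by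
  suffices dist ℓ a b - dist ℓ c b ≤ dist ℓ a c by linarith
  refine le_dist ℓ hac.le fun l₁ hl₁ => ?_
  suffices dist ℓ a b - pathLength ℓ l₁ ≤ dist ℓ c b by linarith
  refine le_dist ℓ hcb.le fun l₂ hl₂ => ?_
  have hjoin : l₂.head? = l₁.getLast? := hl₂.2.1.trans hl₁.2.2.1.symm
  linarith [dist_le_pathLength ℓ (hl₁.append_tail hl₂), pathLength_append_tail_le ℓ hjoin]

/-- triangle inequality: in a c-causet, if `a < c < b` then
`d(a,b) ≤ d(a,c) + d(c,b)`, where `d` is the geodesic distance determined by the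
unique labeling. -/
theorem dist_triangle (hcov : IsCovariant α)
    (ℓ : α ≃ Fin (Fintype.card α)) (hℓ : IsLabeling ℓ)
    (a b c : α) (hac : a < c) (hcb : c < b) :
    dist ℓ a b ≤ dist ℓ a c + dist ℓ c b :=
  dist_triangle_general ℓ a b c hac hcb

end Causet
end

section
/- Let x be a covariant causet (c-causet) and let γ be a geodesic from a to b in x. Then every subpath of γ (a subset of the vertices of γ that is again a path, necessarily from some vertex a' of γ to a later vertex b' of γ) is a geodesic from a' to b'. -/
namespace Causet

variable {α : Type*} [PartialOrder α] [Fintype α]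

/-- A geodesic from `a` to `b`: a path from `a` to `b` of minimal length. -/
def IsGeodesic (ℓ : α ≃ Fin (Fintype.card α)) (l : List α) (a b : α) : Prop :=
  IsPath l a b ∧ ∀ l' : List α, IsPath l' a b → pathLength ℓ l ≤ pathLength ℓ l'

/-! A vertex subset of a path that is again a path is a contiguous segment of it: in a chain of
covering relations, an element covering an entry can only occur as the next entry. The squared
length is additive over consecutive segments, so a shorter replacement for a segment of a
geodesic with the same ends would shorten the geodesic itself. -/

section Lists

variable {β : Type*}

theorem _root_.List.IsChain.splice {R : β → β → Prop} {u m v δ : List β}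
    (h : (u ++ m ++ v).IsChain R) (hδ : δ.IsChain R)
    (hhead : δ.head? = m.head?) (hlast : δ.getLast? = m.getLast?) :
    (u ++ δ ++ v).IsChain R := by
  simp only [List.append_assoc, List.isChain_append, List.head?_append, hhead, hlast] at h ⊢
  exact ⟨h.1, ⟨hδ, h.2.1.2⟩, h.2.2⟩

variable [Preorder β]

theorem _root_.List.IsChain.head?_eq_of_covBy {l t : List β} {x y : β}
    (hl : l.IsChain (· ⋖ ·)) (hs : x :: t <:+ l) (hy : y ∈ l) (hxy : x ⋖ y) :
    t.head? = some y := by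
  obtain ⟨u, rfl⟩ := hs
  have hpw : (u ++ x :: t).Pairwise (· < ·) :=
    List.isChain_iff_pairwise.1 (hl.imp fun _ _ h => h.lt)
  rw [List.pairwise_append] at hpw
  rcases List.mem_append.1 hy with hyu | hyxt
  · exact absurd (hpw.2.2 y hyu x List.mem_cons_self) hxy.lt.asymm
  obtain ⟨z, t', rfl⟩ : ∃ z t', t = z :: t' := by
    rcases t with _ | ⟨z, t'⟩
    · exact absurd (List.mem_singleton.1 hyxt) hxy.lt.ne'
    · exact ⟨z, t', rfl⟩
  have hxz : x ⋖ z := (List.isChain_cons_cons.1 hl.right_of_append).1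
  rcases List.mem_cons.1 hyxt with rfl | hyzt
  · exact absurd hxy.lt (lt_irrefl _)
  rcases List.mem_cons.1 hyzt with rfl | hyt
  · rfl
  · exact absurd (List.rel_of_pairwise_cons hpw.2.1.of_cons hyt) (hxy.2 hxz.lt)

theorem _root_.List.IsChain.isPrefix_of_subset {l s γ : List β}
    (hl : l.IsChain (· ⋖ ·)) (hs : s <:+ l) (hγ : γ.IsChain (· ⋖ ·)) (hsub : γ ⊆ l)
    (hhead : γ.head? = s.head?) : γ <+: s := by
  induction γ generalizing s with
  | nil => exact List.nil_prefix
  | cons x γ ih =>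
    obtain ⟨s', rfl⟩ : ∃ s', s = x :: s' := List.head?_eq_some_iff.1 hhead.symm
    rcases γ with _ | ⟨y, γ⟩
    · exact List.prefix_cons_inj x |>.2 List.nil_prefix
    obtain ⟨hxy, hγ⟩ := List.isChain_cons_cons.1 hγ
    obtain ⟨s'', rfl⟩ := List.head?_eq_some_iff.1
      (hl.head?_eq_of_covBy hs (hsub (by simp)) hxy)
    exact List.prefix_cons_inj x |>.2 <|
      ih ((List.suffix_cons x _).trans hs) hγ (fun z hz => hsub (by simp [hz])) rfl

theorem _root_.List.IsChain.isInfix_of_subset {l γ : List β} (hl : l.IsChain (· ⋖ ·))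
    (hγ : γ.IsChain (· ⋖ ·)) (hsub : γ ⊆ l) : γ <:+: l := by
  rcases γ with _ | ⟨x, γ⟩
  · exact List.nil_infix
  obtain ⟨u, t, rfl⟩ := List.append_of_mem (hsub List.mem_cons_self)
  have hs : x :: t <:+ u ++ x :: t := List.suffix_append u _
  exact (hl.isPrefix_of_subset hs hγ hsub rfl).isInfix.trans hs.isInfix

end Lists

section AdjacentSum

variable {β M : Type*}

def adjacentSum [AddMonoid M] (f : β → β → M) (l : List β) : M :=
  ((l.zip l.tail).map fun p => f p.1 p.2).sum

@[simp]
theorem adjacentSum_nil [AddMonoid M] (f : β → β → M) : adjacentSum f [] = 0 := rfl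

@[simp]
theorem adjacentSum_singleton [AddMonoid M] (f : β → β → M) (x : β) :
    adjacentSum f [x] = 0 := rfl

@[simp]
theorem adjacentSum_cons_cons [AddMonoid M] (f : β → β → M) (x y : β) (l : List β) :
    adjacentSum f (x :: y :: l) = f x y + adjacentSum f (y :: l) := by
  simp [adjacentSum]

theorem adjacentSum_append_cons [AddMonoid M] (f : β → β → M) (x : β) :
    ∀ u v : List β, adjacentSum f (u ++ x :: v) = adjacentSum f (u ++ [x]) + adjacentSum f (x :: v)
  | [], _ => by simp
  | [y], _ => by simp
  | y :: z :: u, v => by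
    simp only [List.cons_append, adjacentSum_cons_cons, add_assoc]
    rw [← List.cons_append, adjacentSum_append_cons f x (z :: u) v, List.cons_append]

theorem adjacentSum_splice [AddMonoid M] (f : β → β → M) {u m v : List β} {a b : β}
    (hhead : m.head? = some a) (hlast : m.getLast? = some b) :
    adjacentSum f (u ++ m ++ v) =
      adjacentSum f (u ++ [a]) + adjacentSum f m + adjacentSum f (b :: v) := by
  have hleft : adjacentSum f (u ++ m ++ v) = adjacentSum f (u ++ [a]) + adjacentSum f (m ++ v) := by
    obtain ⟨m', rfl⟩ := List.head?_eq_some_iff.1 hhead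
    simpa using adjacentSum_append_cons f a u (m' ++ v)
  have hright : adjacentSum f (m ++ v) = adjacentSum f m + adjacentSum f (b :: v) := by
    obtain ⟨m', rfl⟩ := List.getLast?_eq_some_iff.1 hlast
    simpa using adjacentSum_append_cons f b m' v
  rw [hleft, hright, add_assoc]

theorem adjacentSum_nonneg [AddCommMonoid M] [PartialOrder M] [IsOrderedAddMonoid M]
    {f : β → β → M} (hf : ∀ x y, 0 ≤ f x y) (l : List β) : 0 ≤ adjacentSum f l :=
  List.sum_nonneg fun _ hp => by
    obtain ⟨p, -, rfl⟩ := List.mem_map.1 hp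
    exact hf _ _

end AdjacentSum

theorem IsPath.splice {β : Type*} [PartialOrder β] {u m v δ : List β} {a b a' b' : β}
    (h : IsPath (u ++ m ++ v) a b) (hm : IsPath m a' b') (hδ : IsPath δ a' b') :
    IsPath (u ++ δ ++ v) a b := by
  obtain ⟨-, hh, hl, hc⟩ := h
  obtain ⟨-, hmh, hml, -⟩ := hm
  obtain ⟨hδ0, hδh, hδl, hδc⟩ := hδ
  refine ⟨by simp [hδ0], ?_, ?_, List.IsChain.splice hc hδc (hδh.trans hmh.symm)
    (hδl.trans hml.symm)⟩
  · simpa only [List.head?_append, hδh, hmh] using hh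
  · simpa only [List.getLast?_append, hδl, hml] using hl

theorem pathLength_eq_sqrt_adjacentSum {β : Type*} [Fintype β] (ℓ : β ≃ Fin (Fintype.card β))
    (l : List β) :
    pathLength ℓ l = √(adjacentSum (fun x y => (((ℓ y : ℕ) : ℝ) - ((ℓ x : ℕ) : ℝ)) ^ 2) l) :=
  rfl

theorem IsGeodesic.of_append {ℓ : α ≃ Fin (Fintype.card α)} {u m v : List α} {a b a' b' : α}
    (h : IsGeodesic ℓ (u ++ m ++ v) a b) (hm : IsPath m a' b') : IsGeodesic ℓ m a' b' := by
  refine ⟨hm, fun δ hδ => ?_⟩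
  have hle := h.2 _ (h.1.splice hm hδ)
  rw [pathLength_eq_sqrt_adjacentSum, pathLength_eq_sqrt_adjacentSum,
    adjacentSum_splice _ hm.2.1 hm.2.2.1, adjacentSum_splice _ hδ.2.1 hδ.2.2.1] at hle
  rw [pathLength_eq_sqrt_adjacentSum, pathLength_eq_sqrt_adjacentSum]
  have hE := adjacentSum_nonneg (fun x y => sq_nonneg (((ℓ y : ℕ) : ℝ) - ((ℓ x : ℕ) : ℝ)))
  rw [Real.sqrt_le_sqrt_iff (add_nonneg (add_nonneg (hE _) (hE _)) (hE _))] at hle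
  exact Real.sqrt_le_sqrt (by linarith)

theorem subpath_of_geodesic_general (ℓ : α ≃ Fin (Fintype.card α))
    (γ : List α) (a b : α) (hγ : IsGeodesic ℓ γ a b)
    (γ' : List α) (a' b' : α)
    (hsub : ∀ x ∈ γ', x ∈ γ) (hpath : IsPath γ' a' b') :
    IsGeodesic ℓ γ' a' b' := by
  obtain ⟨u, v, rfl⟩ := hγ.1.2.2.2.isInfix_of_subset hpath.2.2.2 hsub
  exact hγ.of_append hpath

/-- in a c-causet, a subpath of a geodesic (a subset of the vertices of
the geodesic which is again a path, from some `a'` to some `b'`) is itself a geodesic. -/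
theorem subpath_of_geodesic (hcov : IsCovariant α)
    (ℓ : α ≃ Fin (Fintype.card α)) (hℓ : IsLabeling ℓ)
    (γ : List α) (a b : α) (hγ : IsGeodesic ℓ γ a b)
    (γ' : List α) (a' b' : α)
    (hsub : ∀ x ∈ γ', x ∈ γ) (hpath : IsPath γ' a' b') :
    IsGeodesic ℓ γ' a' b' :=
  subpath_of_geodesic_general ℓ γ a b hγ γ' a' b' hsub hpath

end Causet
end

section
/- Let x be a covariant causet (c-causet) and let a, b, c be elements of x with a < c < b. Then d₁(a,b) ≤ d₁(a,c) + d₁(c,b), where d₁ is the distance determined by the max-step length ℓ₁. -/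
namespace Causet

variable {α : Type*} [PartialOrder α] [Fintype α]

/-- The max-step length `ℓ₁` of a path: the maximum of the absolute label differences of
consecutive vertices. -/
def pathLength1 (ℓ : α ≃ Fin (Fintype.card α)) (l : List α) : ℕ :=
  ((l.zip l.tail).map fun p => (((ℓ p.2 : ℕ) : ℤ) - ((ℓ p.1 : ℕ) : ℤ)).natAbs).foldr max 0

/-- The distance `d₁ a b`: the minimal `ℓ₁`-length of a path from `a` to `b`. -/
noncomputable def dist1 (ℓ : α ≃ Fin (Fintype.card α)) (a b : α) : ℕ :=
  sInf {m : ℕ | ∃ l : List α, IsPath l a b ∧ m = pathLength1 ℓ l}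

end Causet

/-! Gluing a 1-geodesic from `a` to `c` to one from `c` to `b` gives a path from `a` to `b`
whose `ℓ₁`-length is the larger of the two, so `d₁(a,b) ≤ max (d₁(a,c)) (d₁(c,b))`.
Geodesics exist between comparable elements because a finite poset has covering chains between
them; where no path exists, `d₁` is the junk value `sInf ∅ = 0`. -/

namespace Causet

section

variable {α : Type*} [Fintype α] (ℓ : α ≃ Fin (Fintype.card α))

lemma pathLength1_cons_cons (x y : α) (r : List α) :
    pathLength1 ℓ (x :: y :: r) =
      max (((ℓ y : ℕ) : ℤ) - ((ℓ x : ℕ) : ℤ)).natAbs (pathLength1 ℓ (y :: r)) := by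
  simp [pathLength1]

lemma pathLength1_append_le {c : α} (q : List α) :
    ∀ {p : List α}, p.getLast? = some c →
      pathLength1 ℓ (p ++ q) ≤ max (pathLength1 ℓ p) (pathLength1 ℓ (c :: q))
  | [d], hd => by simp_all [pathLength1]
  | x :: y :: r, hd => by
    have ih := pathLength1_append_le q (p := y :: r) (by rwa [List.getLast?_cons_cons] at hd)
    simp only [List.cons_append, pathLength1_cons_cons] at ih ⊢
    omega

end

section

variable {α : Type*} [PartialOrder α]

lemma isPath_pair {a b : α} (h : a ⋖ b) : IsPath [a, b] a b :=
  ⟨by simp, rfl, rfl, List.isChain_pair.mpr h⟩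

lemma IsPath.append_tail_s8 {a b c : α} {p q : List α} (hp : IsPath p a c) (hq : IsPath q c b) :
    IsPath (p ++ q.tail) a b := by
  obtain ⟨hp0, hph, hpl, hpc⟩ := hp
  obtain ⟨-, hqh, hql, hqc⟩ := hq
  obtain ⟨t, rfl⟩ : ∃ t, q = c :: t := List.head?_eq_some_iff.mp hqh
  refine ⟨by simp [hp0], by rwa [List.head?_append_of_ne_nil _ hp0], ?_, ?_⟩
  · cases t with
    | nil => simpa [hpl] using hql
    | cons u s =>
      rw [List.getLast?_cons_cons] at hql
      rwa [List.tail_cons, List.getLast?_append_of_ne_nil _ (List.cons_ne_nil u s)]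
  · obtain ⟨hct, ht⟩ := List.isChain_cons.mp hqc
    refine List.IsChain.append hpc ht fun x hx y hy => ?_
    rw [hpl, Option.mem_some_iff] at hx
    exact hx ▸ hct y hy

lemma exists_isPath_of_lt [Finite α] {a b : α} (hab : a < b) : ∃ l : List α, IsPath l a b := by
  induction a using WellFoundedGT.induction with
  | _ a ih =>
    obtain ⟨x, hax, hxb⟩ := exists_covBy_le_of_lt hab
    rcases hxb.eq_or_lt with rfl | hxb
    · exact ⟨_, isPath_pair hax⟩
    · obtain ⟨l, hl⟩ := ih x hax.lt hxb
      exact ⟨_, (isPath_pair hax).append_tail_s8 hl⟩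

variable [Fintype α]

lemma dist1_le_pathLength1 (ℓ : α ≃ Fin (Fintype.card α)) {a b : α} {l : List α}
    (hl : IsPath l a b) :
    dist1 ℓ a b ≤ pathLength1 ℓ l :=
  Nat.sInf_le ⟨l, hl, rfl⟩

lemma exists_isPath_pathLength1_eq_dist1 (ℓ : α ≃ Fin (Fintype.card α)) {a b : α}
    (hab : a < b) :
    ∃ l : List α, IsPath l a b ∧ pathLength1 ℓ l = dist1 ℓ a b := by
  obtain ⟨l, hl⟩ := exists_isPath_of_lt hab
  obtain ⟨g, hg, hgl⟩ := Nat.sInf_mem (⟨_, l, hl, rfl⟩ :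
    {m : ℕ | ∃ l : List α, IsPath l a b ∧ m = pathLength1 ℓ l}.Nonempty)
  exact ⟨g, hg, hgl.symm⟩

lemma dist1_le_max (ℓ : α ≃ Fin (Fintype.card α)) {a b c : α} (hac : a < c) (hcb : c < b) :
    dist1 ℓ a b ≤ max (dist1 ℓ a c) (dist1 ℓ c b) := by
  obtain ⟨p, hp, hpd⟩ := exists_isPath_pathLength1_eq_dist1 ℓ hac
  obtain ⟨q, hq, hqd⟩ := exists_isPath_pathLength1_eq_dist1 ℓ hcb
  obtain ⟨t, rfl⟩ : ∃ t, q = c :: t := List.head?_eq_some_iff.mp hq.2.1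
  calc dist1 ℓ a b ≤ pathLength1 ℓ (p ++ t) := dist1_le_pathLength1 ℓ (hp.append_tail_s8 hq)
    _ ≤ max (pathLength1 ℓ p) (pathLength1 ℓ (c :: t)) := pathLength1_append_le ℓ t hp.2.2.1
    _ = max (dist1 ℓ a c) (dist1 ℓ c b) := by rw [hpd, hqd]

theorem dist1_triangle_general (ℓ : α ≃ Fin (Fintype.card α)) (a b c : α)
    (hac : a < c) (hcb : c < b) :
    dist1 ℓ a b ≤ dist1 ℓ a c + dist1 ℓ c b :=
  (dist1_le_max ℓ hac hcb).trans (max_le_add_of_nonneg (Nat.zero_le _) (Nat.zero_le _))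

/-- triangle inequality for `d₁`: in a c-causet, if `a < c < b` then
`d₁(a,b) ≤ d₁(a,c) + d₁(c,b)`. -/
theorem dist1_triangle (hcov : IsCovariant α)
    (ℓ : α ≃ Fin (Fintype.card α)) (hℓ : IsLabeling ℓ)
    (a b c : α) (hac : a < c) (hcb : c < b) :
    dist1 ℓ a b ≤ dist1 ℓ a c + dist1 ℓ c b :=
  dist1_triangle_general ℓ a b c hac hcb

end

end Causet
end

section
/- In the covariant causet x with shell sequence (1,2,3,4), with vertices identified with their labels (1; 2,3; 4,5,6; 7,8,9,10), the path 1-2-5-8 is a 1-geodesic (it has ℓ₁-length 3 = d₁(1,8)), but its subpath 1-2-5 is not a 1-geodesic (it has ℓ₁-length 3 while d₁(1,5) = 2). Hence the subpath-of-a-geodesic property fails for the length ℓ₁. -/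
/-! Parents lie in the next shell, so a path from `a` to `b` has exactly `sh b - sh a` steps, and
along them the label climbs from `a + 1` to `b + 1`; hence some step climbs by at least
`(b - a) / (sh b - sh a)`. This gives `d₁(1,8) ≥ ⌈7/3⌉ = 3` and `d₁(1,5) ≥ ⌈4/2⌉ = 2`, attained by
`1-2-5-8` and `1-3-5`, whereas `1-2-5` contains the jump from 2 to 5. -/

namespace Causet10

/-- The shell (height) of each of the 10 vertices of the c-causet with shell sequence
(1,2,3,4): vertex `i` (with label `i+1`) lies in shell 0, 1, 2 or 3 according to the
labeling (1; 2,3; 4,5,6; 7,8,9,10). -/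
def sh (i : Fin 10) : ℕ :=
  if (i : ℕ) = 0 then 0 else if (i : ℕ) ≤ 2 then 1 else if (i : ℕ) ≤ 5 then 2 else 3

/-- The strict order of the causet: every vertex in shell `j` is below every vertex in
shell `j'` whenever `j < j'`. -/
def lt (a b : Fin 10) : Prop := sh a < sh b

/-- `a` is a parent of `b`: `a < b` and there is no `c` with `a < c < b`. -/
def Parent (a b : Fin 10) : Prop := lt a b ∧ ¬ ∃ c : Fin 10, lt a c ∧ lt c b

/-- `l` is a path from `a` to `b`: a nonempty sequence starting at `a`, ending at `b`,
in which each element is a parent of the next. -/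
def IsPath (l : List (Fin 10)) (a b : Fin 10) : Prop :=
  l ≠ [] ∧ l.head? = some a ∧ l.getLast? = some b ∧ l.Chain' Parent

/-- The `ℓ₁`-length of a path: the maximum of the absolute label differences of
consecutive vertices (vertex `i` has label `i+1`). -/
def len1 (l : List (Fin 10)) : ℕ :=
  ((l.zip l.tail).map fun p =>
    ((((p.2 : ℕ) + 1 : ℕ) : ℤ) - (((p.1 : ℕ) + 1 : ℕ) : ℤ)).natAbs).foldr max 0

/-- The distance `d₁ a b`: the minimal `ℓ₁`-length of a path from `a` to `b`. -/
noncomputable def d1 (a b : Fin 10) : ℕ :=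
  sInf {m : ℕ | ∃ l : List (Fin 10), IsPath l a b ∧ m = len1 l}

/-- A 1-geodesic from `a` to `b`: a path from `a` to `b` of minimal `ℓ₁`-length. -/
def Is1Geodesic (l : List (Fin 10)) (a b : Fin 10) : Prop :=
  IsPath l a b ∧ ∀ l' : List (Fin 10), IsPath l' a b → len1 l ≤ len1 l'

instance : DecidableRel lt := fun a b => inferInstanceAs (Decidable (sh a < sh b))

instance : DecidableRel Parent := fun a b =>
  inferInstanceAs (Decidable (lt a b ∧ ¬ ∃ c : Fin 10, lt a c ∧ lt c b))

instance (l : List (Fin 10)) (a b : Fin 10) : Decidable (IsPath l a b) :=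
  inferInstanceAs (Decidable (l ≠ [] ∧ l.head? = some a ∧ l.getLast? = some b ∧ l.IsChain Parent))

theorem sh_eq_succ_of_parent : ∀ a b : Fin 10, Parent a b → sh b = sh a + 1 := by decide

theorem IsPath.sh_add_length {l : List (Fin 10)} {a b : Fin 10} (h : IsPath l a b) :
    sh a + l.length = sh b + 1 := by
  induction l generalizing a with
  | nil => exact absurd rfl h.1
  | cons p t ih =>
    obtain ⟨-, hhead, hlast, hchain⟩ := h
    obtain rfl : p = a := Option.some_injective _ hhead
    cases t with
    | nil => simp_all
    | cons q t =>
      obtain ⟨hpq, hchain⟩ := List.isChain_cons_cons.mp hchain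
      have := ih ⟨List.cons_ne_nil _ _, rfl, by simpa using hlast, hchain⟩
      simp only [List.length_cons] at this ⊢
      rw [sh_eq_succ_of_parent p q hpq] at this
      omega

theorem len1_cons_cons (x y : Fin 10) (t : List (Fin 10)) :
    len1 (x :: y :: t) = max ((y : ℤ) - x).natAbs (len1 (y :: t)) := by
  simp [len1]

theorem getLast_le_add_length_mul_len1 :
    ∀ (x : Fin 10) (t : List (Fin 10)) (b : Fin 10), (x :: t).getLast? = some b →
      (b : ℕ) ≤ x + t.length * len1 (x :: t)
  | x, [], b, h => by simp_all
  | x, y :: t, b, h => by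
    have ih := getLast_le_add_length_mul_len1 y t b (by simpa using h)
    have hstep : (y : ℕ) ≤ x + len1 (x :: y :: t) := by rw [len1_cons_cons]; omega
    have hrest : len1 (y :: t) ≤ len1 (x :: y :: t) := by rw [len1_cons_cons]; omega
    simp only [List.length_cons, add_mul, one_mul]
    linarith [Nat.mul_le_mul_left t.length hrest]

theorem IsPath.le_add_mul_len1 {l : List (Fin 10)} {a b : Fin 10} (h : IsPath l a b) :
    (b : ℕ) ≤ a + (sh b - sh a) * len1 l := by
  have hlength := h.sh_add_length
  obtain ⟨hne, hhead, hlast, -⟩ := h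
  obtain ⟨x, t, rfl⟩ := List.exists_cons_of_ne_nil hne
  obtain rfl : x = a := Option.some_injective _ hhead
  have := getLast_le_add_length_mul_len1 x t b hlast
  simp only [List.length_cons] at hlength
  rwa [show sh b - sh x = t.length by omega]

theorem Is1Geodesic.d1_eq {l : List (Fin 10)} {a b : Fin 10} (h : Is1Geodesic l a b) :
    d1 a b = len1 l :=
  le_antisymm (Nat.sInf_le ⟨l, h.1, rfl⟩)
    (le_csInf ⟨_, l, h.1, rfl⟩ fun _ ⟨l', hl', hm⟩ => hm ▸ h.2 l' hl')

/-- in the c-causet with shell sequence (1,2,3,4) and vertices labeled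
(1; 2,3; 4,5,6; 7,8,9,10), the path 1-2-5-8 (vertices `[0,1,4,7]`, 0-indexed) is a
1-geodesic of `ℓ₁`-length `3 = d₁(1,8)`, while its subpath 1-2-5 (`[0,1,4]`) is a path
of `ℓ₁`-length 3 which is *not* a 1-geodesic, since `d₁(1,5) = 2`.  Hence the
subpath-of-a-geodesic property fails for `ℓ₁`. -/
theorem subpath_property_fails_for_len1 :
    Is1Geodesic [0, 1, 4, 7] 0 7 ∧ len1 [0, 1, 4, 7] = 3 ∧ d1 0 7 = 3 ∧
    (∀ v ∈ [(0 : Fin 10), 1, 4], v ∈ [(0 : Fin 10), 1, 4, 7]) ∧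
    IsPath [0, 1, 4] 0 4 ∧ len1 [0, 1, 4] = 3 ∧ d1 0 4 = 2 ∧
    ¬ Is1Geodesic [0, 1, 4] 0 4 := by
  have hlen0147 : len1 [(0 : Fin 10), 1, 4, 7] = 3 := by decide
  have hlen014 : len1 [(0 : Fin 10), 1, 4] = 3 := by decide
  have hlen024 : len1 [(0 : Fin 10), 2, 4] = 2 := by decide
  have geodesic0147 : Is1Geodesic [0, 1, 4, 7] 0 7 :=
    ⟨by decide, fun l hl => by have : 7 ≤ 0 + 3 * len1 l := hl.le_add_mul_len1; omega⟩
  have geodesic024 : Is1Geodesic [0, 2, 4] 0 4 :=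
    ⟨by decide, fun l hl => by have : 4 ≤ 0 + 2 * len1 l := hl.le_add_mul_len1; omega⟩
  refine ⟨geodesic0147, hlen0147, hlen0147 ▸ geodesic0147.d1_eq, by decide, by decide, hlen014,
    hlen024 ▸ geodesic024.d1_eq, fun h => ?_⟩
  have := h.d1_eq.symm.trans geodesic024.d1_eq
  omega

end Causet10
end

section
/- Let m > 0, 𝐩 = (p₁,p₂,p₃) ∈ ℝ³, p₄ = √(‖𝐩‖² + m²), p = (p₁,p₂,p₃,p₄), and s ∈ {0,1}. Let c^k_{n,j} ∈ ℂ be coupling constants and w(p,·) a discrete plane wave for p. Define the spinor ψ^{(+)}_{p,s}(x_{n,j}) = u(𝐩,s) w(p, x_{n,j}) ∈ ℂ⁴, where u(𝐩,s) = (|s⟩, (𝛔·𝐩)/(p₄+m) |s⟩) in 2+2 block form. Then ψ^{(+)}_{p,s} satisfies the discrete free Dirac equation: (i γ·∇ − m) ψ^{(+)}_{p,s}(x_{n,j}) = 0 for all n, j. -/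
/-!
On a discrete plane wave each covariant difference `∇_k` acts on `ψ = u w` as multiplication
by `± i p_k`, so the discrete Dirac operator reduces to the constant matrix `γ·p` and the equation
becomes `(γ·p - m) u = 0`. In 2+2 block form this holds because `(𝛔·𝐩)² = ‖𝐩‖²` and
`p₄² - m² = ‖𝐩‖²`, i.e. `(𝛔·𝐩)² = (p₄ - m)(p₄ + m)`.
-/

namespace CCausetGrowth

open Matrix

/-- The Pauli matrix σ₁. -/
def σ1 : Matrix (Fin 2) (Fin 2) ℂ := !![0, 1; 1, 0]

/-- The Pauli matrix σ₂. -/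
def σ2 : Matrix (Fin 2) (Fin 2) ℂ := !![0, -Complex.I; Complex.I, 0]

/-- The Pauli matrix σ₃. -/
def σ3 : Matrix (Fin 2) (Fin 2) ℂ := !![1, 0; 0, -1]

/-- The gamma matrix `γ₁ = [[0, −σ₁], [σ₁, 0]]` in 2+2 block form. -/
def γ1 : Matrix (Fin 4) (Fin 4) ℂ :=
  !![0, 0, 0, -1; 0, 0, -1, 0; 0, 1, 0, 0; 1, 0, 0, 0]

/-- The gamma matrix `γ₂ = [[0, −σ₂], [σ₂, 0]]` in 2+2 block form. -/
def γ2 : Matrix (Fin 4) (Fin 4) ℂ :=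
  !![0, 0, 0, Complex.I; 0, 0, -Complex.I, 0; 0, -Complex.I, 0, 0; Complex.I, 0, 0, 0]

/-- The gamma matrix `γ₃ = [[0, −σ₃], [σ₃, 0]]` in 2+2 block form. -/
def γ3 : Matrix (Fin 4) (Fin 4) ℂ :=
  !![0, 0, -1, 0; 0, 0, 0, 1; 1, 0, 0, 0; 0, -1, 0, 0]

/-- The gamma matrix `γ₄ = [[σ₄, 0], [0, −σ₄]]` in 2+2 block form. -/
def γ4 : Matrix (Fin 4) (Fin 4) ℂ :=
  !![1, 0, 0, 0; 0, 1, 0, 0; 0, 0, -1, 0; 0, 0, 0, -1]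

/-- The qubits `|0⟩ = (1,0)` and `|1⟩ = (0,1)` in `ℂ²`. -/
def ket (s : Fin 2) : Fin 2 → ℂ := fun i => if i = s then 1 else 0

/-- For `𝐩 ∈ ℝ³`, the matrix `𝛔·𝐩 = p₁σ₁ + p₂σ₂ + p₃σ₃`. -/
noncomputable def sigma3Dot (pv : Fin 3 → ℝ) : Matrix (Fin 2) (Fin 2) ℂ :=
  (pv 0 : ℂ) • σ1 + (pv 1 : ℂ) • σ2 + (pv 2 : ℂ) • σ3

/-- The covariant difference operator in direction `k` (for `k : Fin 4`, representing
direction `k+1`), acting componentwise on `ℂ⁴`-valued functions (spinors) of the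
vertices: `∇_k f(x_{n,j}) = f(x_{n+2,4j+k}) − c^k_{n+2,4j+k} · f(x_{n,j})`, where
`c k N J` is the coupling constant `c^{k+1}_{N,J}`. -/
noncomputable def nablaS (c : Fin 4 → ℕ → ℕ → ℂ) (k : Fin 4)
    (f : ℕ → ℕ → Fin 4 → ℂ) (n j : ℕ) : Fin 4 → ℂ :=
  f (n + 2) (4 * j + (k : ℕ)) - c k (n + 2) (4 * j + (k : ℕ)) • f n j

/-- `w` is a discrete plane wave in direction `p = (p₁,p₂,p₃,p₄)`:
`w(x_{n+2,4j+k−1}) = (c^k_{n+2,4j+k−1} + i·p_k)·w(x_{n,j})` for `k = 1,2,3` and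
`w(x_{n+2,4j+3}) = (c^4_{n+2,4j+3} − i·p₄)·w(x_{n,j})`, at every vertex `x_{n,j}`. -/
def IsPlaneWave (c : Fin 4 → ℕ → ℕ → ℂ) (p : Fin 4 → ℝ) (w : ℕ → ℕ → ℂ) : Prop :=
  ∀ n j : ℕ, 1 ≤ n → j < 2 ^ (n - 1) → ∀ k : Fin 4,
    w (n + 2) (4 * j + (k : ℕ)) =
      (c k (n + 2) (4 * j + (k : ℕ)) +
        (if (k : ℕ) = 3 then -1 else 1) * Complex.I * (p k : ℂ)) * w n j

/-- The discrete free Dirac operator `i γ·∇ = −iγ₁∇₁ − iγ₂∇₂ − iγ₃∇₃ + iγ₄∇₄` applied to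
a spinor-valued function `ψ` at the vertex `x_{n,j}`. -/
noncomputable def diracOp (c : Fin 4 → ℕ → ℕ → ℂ) (ψ : ℕ → ℕ → Fin 4 → ℂ)
    (n j : ℕ) : Fin 4 → ℂ :=
  (-Complex.I) • γ1.mulVec (nablaS c 0 ψ n j) + (-Complex.I) • γ2.mulVec (nablaS c 1 ψ n j)
    + (-Complex.I) • γ3.mulVec (nablaS c 2 ψ n j) + Complex.I • γ4.mulVec (nablaS c 3 ψ n j)

noncomputable def gammaDot (pv : Fin 3 → ℝ) (p4 : ℝ) : Matrix (Fin 4) (Fin 4) ℂ :=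
  (pv 0 : ℂ) • γ1 + (pv 1 : ℂ) • γ2 + (pv 2 : ℂ) • γ3 + (p4 : ℂ) • γ4

theorem sigma3Dot_mul_self (pv : Fin 3 → ℝ) :
    sigma3Dot pv * sigma3Dot pv = ((pv 0 ^ 2 + pv 1 ^ 2 + pv 2 ^ 2 : ℝ) : ℂ) • 1 := by
  ext i j
  fin_cases i <;> fin_cases j <;>
    simp [sigma3Dot, σ1, σ2, σ3, Matrix.mul_apply, Fin.sum_univ_two] <;>
    grind [Complex.I_mul_I]

theorem gammaDot_mulVec (pv : Fin 3 → ℝ) (p4 : ℝ) (v t : Fin 2 → ℂ) :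
    gammaDot pv p4 *ᵥ ![v 0, v 1, t 0, t 1] =
      ![p4 * v 0 - (sigma3Dot pv *ᵥ t) 0, p4 * v 1 - (sigma3Dot pv *ᵥ t) 1,
        (sigma3Dot pv *ᵥ v) 0 - p4 * t 0, (sigma3Dot pv *ᵥ v) 1 - p4 * t 1] := by
  ext i
  fin_cases i <;>
    simp [gammaDot, γ1, γ2, γ3, γ4, sigma3Dot, σ1, σ2, σ3, mulVec, dotProduct,
      Fin.sum_univ_four, Fin.sum_univ_two] <;> ring

theorem gammaDot_mulVec_positiveEnergySpinor (pv : Fin 3 → ℝ) (m p4 : ℝ) (hpm : p4 + m ≠ 0)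
    (hsq : p4 ^ 2 = pv 0 ^ 2 + pv 1 ^ 2 + pv 2 ^ 2 + m ^ 2) (v : Fin 2 → ℂ) :
    gammaDot pv p4 *ᵥ ![v 0, v 1, (((p4 + m : ℝ) : ℂ)⁻¹ • sigma3Dot pv *ᵥ v) 0,
        (((p4 + m : ℝ) : ℂ)⁻¹ • sigma3Dot pv *ᵥ v) 1] =
      (m : ℂ) • ![v 0, v 1, (((p4 + m : ℝ) : ℂ)⁻¹ • sigma3Dot pv *ᵥ v) 0,
        (((p4 + m : ℝ) : ℂ)⁻¹ • sigma3Dot pv *ᵥ v) 1] := by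
  have hpmC : (p4 : ℂ) + m ≠ 0 := by exact_mod_cast hpm
  have hS : sigma3Dot pv *ᵥ (((p4 + m : ℝ) : ℂ)⁻¹ • sigma3Dot pv *ᵥ v) =
      ((p4 - m : ℝ) : ℂ) • v := by
    rw [mulVec_smul, mulVec_mulVec, sigma3Dot_mul_self, smul_mulVec, one_mulVec, smul_smul,
      show pv 0 ^ 2 + pv 1 ^ 2 + pv 2 ^ 2 = (p4 - m) * (p4 + m) by linear_combination -hsq]
    push_cast
    field_simp
  rw [gammaDot_mulVec, hS]
  ext i
  fin_cases i <;> simp <;> field_simp <;> ring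

theorem nablaS_eq_smul_of_isPlaneWave {c : Fin 4 → ℕ → ℕ → ℂ} {p : Fin 4 → ℝ}
    {w : ℕ → ℕ → ℂ} (hw : IsPlaneWave c p w) {u : Fin 4 → ℂ} {ψ : ℕ → ℕ → Fin 4 → ℂ}
    (hψ : ∀ n j, ψ n j = w n j • u) {n j : ℕ} (hn : 1 ≤ n) (hj : j < 2 ^ (n - 1))
    (k : Fin 4) :
    nablaS c k ψ n j =
      ((if (k : ℕ) = 3 then -1 else 1) * Complex.I * (p k : ℂ) * w n j) • u := by
  rw [nablaS, hψ, hψ, hw n j hn hj k, smul_smul, ← sub_smul]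
  ring_nf

theorem diracOp_eq_smul_gammaDot_mulVec {c : Fin 4 → ℕ → ℕ → ℂ} {pv : Fin 3 → ℝ} {p4 : ℝ}
    {w : ℕ → ℕ → ℂ} (hw : IsPlaneWave c ![pv 0, pv 1, pv 2, p4] w) {u : Fin 4 → ℂ}
    {ψ : ℕ → ℕ → Fin 4 → ℂ} (hψ : ∀ n j, ψ n j = w n j • u) {n j : ℕ} (hn : 1 ≤ n)
    (hj : j < 2 ^ (n - 1)) :
    diracOp c ψ n j = w n j • gammaDot pv p4 *ᵥ u := by
  simp only [diracOp, nablaS_eq_smul_of_isPlaneWave hw hψ hn hj, gammaDot, mulVec_smul,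
    add_mulVec, smul_mulVec]
  match_scalars <;> simp <;> grind [Complex.I_mul_I]

/-- let `m > 0`, `𝐩 ∈ ℝ³`, `p₄ = √(‖𝐩‖² + m²)`, `p = (𝐩, p₄)`, and let
`w(p,·)` be a discrete plane wave for `p`.  For `s ∈ {0,1}`, the spinor
`ψ⁺_{p,s}(x_{n,j}) = u(𝐩,s)·w(p,x_{n,j})`, with `u(𝐩,s) = (|s⟩, (𝛔·𝐩)/(p₄+m)|s⟩)` in
2+2 block form, satisfies the discrete free Dirac equation
`(i γ·∇ − m) ψ⁺_{p,s}(x_{n,j}) = 0`. -/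
theorem discrete_dirac_equation_pos (m : ℝ) (hm : 0 < m) (pv : Fin 3 → ℝ) (p4 : ℝ)
    (hp4 : p4 = Real.sqrt ((pv 0) ^ 2 + (pv 1) ^ 2 + (pv 2) ^ 2 + m ^ 2))
    (c : Fin 4 → ℕ → ℕ → ℂ) (w : ℕ → ℕ → ℂ)
    (hw : IsPlaneWave c ![pv 0, pv 1, pv 2, p4] w)
    (s : Fin 2) (u : Fin 4 → ℂ)
    (hu : u = ![ket s 0, ket s 1,
      (((p4 + m : ℝ) : ℂ)⁻¹ • (sigma3Dot pv).mulVec (ket s)) 0,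
      (((p4 + m : ℝ) : ℂ)⁻¹ • (sigma3Dot pv).mulVec (ket s)) 1])
    (ψ : ℕ → ℕ → Fin 4 → ℂ) (hψ : ∀ n j : ℕ, ψ n j = w n j • u) :
    ∀ n j : ℕ, 1 ≤ n → j < 2 ^ (n - 1) →
      diracOp c ψ n j - (m : ℂ) • ψ n j = 0 := by
  intro n j hn hj
  have hsq : p4 ^ 2 = pv 0 ^ 2 + pv 1 ^ 2 + pv 2 ^ 2 + m ^ 2 := by
    rw [hp4]; exact Real.sq_sqrt (by positivity)
  have hpm : p4 + m ≠ 0 := by rw [hp4]; positivity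
  rw [diracOp_eq_smul_gammaDot_mulVec hw hψ hn hj, hψ, hu,
    gammaDot_mulVec_positiveEnergySpinor pv m p4 hpm hsq, smul_comm, sub_self]

end CCausetGrowth
end
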